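/- arXiv:1707.00528 — 2 statements merged into one kernel-verified Lean document; each statement's English description precedes it below -/
import Mathlib

section
/- (Embedding of W^{1,ρ} into the Besov space B^s_{ρ,2}, stated as a seminorm bound.) Let d ≥ 1, 1 ≤ ρ < ∞, and 0 < s < 1. There exists a constant C > 0, depending only on d, s, ρ, such that for every u ∈ C_c^∞(ℝ^d; ℂ): ∫_0^∞ τ^{−1−2s} ( sup_{|y| < τ} ‖u(· − y) − u‖_{L^ρ(ℝ^d)} )² dτ ≤ C ( ‖u‖_{L^ρ(ℝ^d)} + ‖∇u‖_{L^ρ(ℝ^d)} )². -/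
open MeasureTheory Filter
open scoped RealInnerProductSpace

noncomputable section

abbrev Ed (d : ℕ) : Type := EuclideanSpace ℝ (Fin d)

/-- The `i`-th standard basis vector of `ℝ^d`. -/
def stdBasis {d : ℕ} (i : Fin d) : Ed d := EuclideanSpace.single i 1

/-- The `i`-th spatial partial derivative. -/
def pd {d : ℕ} (f : Ed d → ℂ) (i : Fin d) (x : Ed d) : ℂ :=
  fderiv ℝ f x (stdBasis i)

/-- The spatial Laplacian. -/
def lap {d : ℕ} (f : Ed d → ℂ) (x : Ed d) : ℂ :=
  ∑ i, pd (pd f i) i x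

/-- Squared (Euclidean) pointwise norm of the spatial gradient. -/
def gradNormSq {d : ℕ} (f : Ed d → ℂ) (x : Ed d) : ℝ :=
  ∑ i, ‖pd f i x‖ ^ 2

/-- `L²` norm of `f` restricted to a set `s`. -/
def L2On {d : ℕ} (s : Set (Ed d)) (f : Ed d → ℂ) : ℝ :=
  (∫ x in s, ‖f x‖ ^ 2) ^ (1/2 : ℝ)

/-- `L²` norm of `f` on all of `ℝ^d`. -/
def L2 {d : ℕ} (f : Ed d → ℂ) : ℝ :=
  (∫ x, ‖f x‖ ^ 2) ^ (1/2 : ℝ)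

/-- `L²` norm of the spatial gradient of `f`. -/
def gradL2 {d : ℕ} (f : Ed d → ℂ) : ℝ :=
  (∫ x, gradNormSq f x) ^ (1/2 : ℝ)

/-- Distance between two sets. -/
def setDist {d : ℕ} (A B : Set (Ed d)) : ℝ :=
  sInf (Set.image2 dist A B)

/-- A Schwartz solution of the linear Schrödinger equation:
smooth in time-space and `∂ₜ u = i Δ u`. -/
def IsLinSchrodSol (d : ℕ) (u : ℝ → SchwartzMap (Ed d) ℂ) : Prop :=
  ContDiff ℝ (⊤ : ℕ∞) (fun p : ℝ × Ed d => u p.1 p.2) ∧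
  ∀ t x, deriv (fun s => u s x) t = Complex.I * lap (u t) x

/-- A Schwartz solution of the nonlinear Schrödinger equation with parameters `lam, σ`:
smooth in time-space and `∂ₜ u = i (Δ u + lam |u|^σ u)`. -/
def IsNLSSol (d : ℕ) (lam σ : ℝ) (u : ℝ → SchwartzMap (Ed d) ℂ) : Prop :=
  ContDiff ℝ (⊤ : ℕ∞) (fun p : ℝ × Ed d => u p.1 p.2) ∧
  ∀ t x, deriv (fun s => u s x) t =
    Complex.I * (lap (u t) x + ((lam * ‖u t x‖ ^ σ : ℝ) : ℂ) * u t x)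

/-- `L^p` norm (real exponent `p`) of a complex-valued function on `ℝ^d`. -/
def LpNorm {d : ℕ} (p : ℝ) (f : Ed d → ℂ) : ℝ :=
  (∫ x, ‖f x‖ ^ p) ^ (1 / p)

/-- `L^p` norm (real exponent `p`) of the gradient of `f`, i.e. of `x ↦ ‖Df(x)‖`. -/
def gradLpNorm {d : ℕ} (p : ℝ) (f : Ed d → ℂ) : ℝ :=
  (∫ x, ‖fderiv ℝ f x‖ ^ p) ^ (1 / p)


namespace BesovAuxNS

variable {d : ℕ} {ρ : ℝ}

lemma bridge {E : Type*} [NormedAddCommGroup E] (hρ : 0 < ρ)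
    {f : Ed d → E} (hf : AEStronglyMeasurable f volume) :
    (∫ x, ‖f x‖ ^ ρ) ^ (1/ρ) = ((∫⁻ x, (‖f x‖₊ : ENNReal) ^ ρ) ^ (1/ρ)).toReal := by
  rw [integral_eq_lintegral_of_nonneg_ae
      (Filter.Eventually.of_forall fun x => Real.rpow_nonneg (norm_nonneg _) ρ)
      (hf.norm.aemeasurable.pow_const ρ).aestronglyMeasurable,
    ← ENNReal.toReal_rpow]
  congr 2
  apply lintegral_congr fun x => ?_
  rw [← ENNReal.ofReal_rpow_of_nonneg (norm_nonneg _) hρ.le, ofReal_norm, enorm_eq_nnnorm]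

lemma translate {E : Type*} [NormedAddCommGroup E] {f : Ed d → E}
    (hf : Continuous f) (y : Ed d) :
    (∫⁻ x, (‖f (x - y)‖₊ : ENNReal) ^ ρ) = ∫⁻ x, (‖f x‖₊ : ENNReal) ^ ρ :=
  (measurePreserving_sub_right volume y).lintegral_comp
    (ENNReal.continuous_rpow_const.comp
      (ENNReal.continuous_coe.comp hf.nnnorm)).measurable

lemma fin_lintegral {E : Type*} [NormedAddCommGroup E] (hρ : 0 < ρ)
    {f : Ed d → E} (hf : Continuous f) (hfs : HasCompactSupport f) :
    (∫⁻ x, (‖f x‖₊ : ENNReal) ^ ρ) ≠ ⊤ := by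
  have hcs : HasCompactSupport fun x => ‖f x‖ ^ ρ := by
    apply HasCompactSupport.comp_left (g := fun r : E => ‖r‖ ^ ρ) hfs
    rw [norm_zero, Real.zero_rpow hρ.ne']
  have hint : Integrable (fun x => ‖f x‖ ^ ρ) volume :=
    (hf.norm.rpow_const fun x => Or.inr hρ.le).integrable_of_hasCompactSupport hcs
  have := hint.lintegral_lt_top
  rw [← lt_top_iff_ne_top]
  refine lt_of_le_of_lt (le_of_eq ?_) this
  apply lintegral_congr fun x => ?_
  rw [← ENNReal.ofReal_rpow_of_nonneg (norm_nonneg _) hρ.le, ofReal_norm, enorm_eq_nnnorm]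

lemma triangle (hρ1 : 1 ≤ ρ) {f g : Ed d → ℂ} (hf : Continuous f) (hg : Continuous g) :
    (∫⁻ x, (‖f x - g x‖₊ : ENNReal) ^ ρ) ^ (1/ρ) ≤
      (∫⁻ x, (‖f x‖₊ : ENNReal) ^ ρ) ^ (1/ρ) + (∫⁻ x, (‖g x‖₊ : ENNReal) ^ ρ) ^ (1/ρ) := by
  have h1 : (∫⁻ x, (‖f x - g x‖₊ : ENNReal) ^ ρ) ^ (1/ρ) ≤
      (∫⁻ x, ((fun x => (‖f x‖₊ : ENNReal)) x + (fun x => (‖g x‖₊ : ENNReal)) x) ^ ρ) ^ (1/ρ) := by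
    apply ENNReal.rpow_le_rpow _ (by positivity)
    apply lintegral_mono fun x => ?_
    apply ENNReal.rpow_le_rpow _ (by linarith)
    rw [← ENNReal.coe_add]
    exact ENNReal.coe_le_coe.2 (nnnorm_sub_le _ _)
  refine h1.trans (ENNReal.lintegral_Lp_add_le ?_ ?_ hρ1)
  · exact (ENNReal.continuous_coe.comp hf.nnnorm).measurable.aemeasurable
  · exact (ENNReal.continuous_coe.comp hg.nnnorm).measurable.aemeasurable

lemma jensen (hρ1 : 1 ≤ ρ) {ν : Measure ℝ} [IsProbabilityMeasure ν]
    {H : ℝ → ENNReal} (hH : AEMeasurable H ν) :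
    (∫⁻ t, H t ∂ν) ^ ρ ≤ ∫⁻ t, H t ^ ρ ∂ν := by
  rcases eq_or_lt_of_le hρ1 with h1 | h1
  · simp [← h1]
  · have hρ0 : (0:ℝ) < ρ := by linarith
    have hpq := Real.HolderConjugate.conjExponent h1
    have key := ENNReal.lintegral_mul_le_Lp_mul_Lq ν hpq hH (aemeasurable_const (b := (1:ENNReal)))
    simp only [Pi.mul_apply, mul_one, ENNReal.one_rpow, lintegral_const, measure_univ, one_mul,
      ENNReal.one_rpow] at key
    calc (∫⁻ t, H t ∂ν) ^ ρ ≤ ((∫⁻ t, H t ^ ρ ∂ν) ^ (1/ρ)) ^ ρ :=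
          ENNReal.rpow_le_rpow key hρ0.le
      _ = ∫⁻ t, H t ^ ρ ∂ν := by
          rw [← ENNReal.rpow_mul, one_div_mul_cancel hρ0.ne', ENNReal.rpow_one]

lemma ftc_pointwise {u : Ed d → ℂ} (hu : ContDiff ℝ (⊤ : ℕ∞) u) (x y : Ed d) :
    ‖u (x - y) - u x‖ ≤ ‖y‖ * ∫ t in (0:ℝ)..1, ‖fderiv ℝ u (x - t • y)‖ := by
  have hDu : Continuous (fderiv ℝ u) := hu.continuous_fderiv (by simp)
  have haff : Continuous (fun t : ℝ => x - t • y) :=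
    continuous_const.sub (continuous_id.smul continuous_const)
  have hG : Continuous (fun t : ℝ => (fderiv ℝ u (x - t • y)) (-y)) :=
    (ContinuousLinearMap.apply ℝ ℂ (-y)).continuous.comp (hDu.comp haff)
  have hderiv : ∀ t ∈ Set.uIcc (0:ℝ) 1,
      HasDerivAt (fun t : ℝ => u (x - t • y)) ((fderiv ℝ u (x - t • y)) (-y)) t := by
    intro t _
    have h1 : HasDerivAt (fun t : ℝ => x - t • y) (-y) t := by
      simpa using ((hasDerivAt_id t).smul_const y).const_sub x
    exact ((hu.differentiable (by simp) (x - t • y)).hasFDerivAt).comp_hasDerivAt t h1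
  have heq : u (x - (1:ℝ) • y) - u (x - (0:ℝ) • y) =
      ∫ t in (0:ℝ)..1, (fderiv ℝ u (x - t • y)) (-y) :=
    (intervalIntegral.integral_eq_sub_of_hasDerivAt hderiv
      (hG.intervalIntegrable 0 1)).symm
  rw [one_smul, zero_smul, sub_zero] at heq
  rw [heq]
  calc ‖∫ t in (0:ℝ)..1, (fderiv ℝ u (x - t • y)) (-y)‖
      ≤ ∫ t in (0:ℝ)..1, ‖(fderiv ℝ u (x - t • y)) (-y)‖ :=
        intervalIntegral.norm_integral_le_integral_norm zero_le_one
    _ ≤ ∫ t in (0:ℝ)..1, ‖fderiv ℝ u (x - t • y)‖ * ‖y‖ := by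
        apply intervalIntegral.integral_mono_on zero_le_one
          (hG.norm.intervalIntegrable 0 1)
          (((hDu.comp haff).norm.mul continuous_const).intervalIntegrable 0 1)
        intro t _
        simpa using (fderiv ℝ u (x - t • y)).le_opNorm (-y)
    _ = ‖y‖ * ∫ t in (0:ℝ)..1, ‖fderiv ℝ u (x - t • y)‖ := by
        rw [intervalIntegral.integral_mul_const]; ring

lemma grad_bound (hρ1 : 1 ≤ ρ) {u : Ed d → ℂ} (hu : ContDiff ℝ (⊤ : ℕ∞) u) (y : Ed d) :
    (∫⁻ x, (‖u (x - y) - u x‖₊ : ENNReal) ^ ρ) ^ (1/ρ) ≤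
      ENNReal.ofReal ‖y‖ * (∫⁻ x, (‖fderiv ℝ u x‖₊ : ENNReal) ^ ρ) ^ (1/ρ) := by
  have hρ0 : (0:ℝ) < ρ := lt_of_lt_of_le zero_lt_one hρ1
  have hDu : Continuous (fderiv ℝ u) := hu.continuous_fderiv (by simp)
  set ν : Measure ℝ := volume.restrict (Set.Ioc (0:ℝ) 1) with hν
  haveI : IsProbabilityMeasure ν := ⟨by simp [hν]⟩
  set K : ENNReal := ∫⁻ x, (‖fderiv ℝ u x‖₊ : ENNReal) ^ ρ with hK
  have hpt : ∀ x : Ed d, (‖u (x - y) - u x‖₊ : ENNReal) ^ ρ ≤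
      ENNReal.ofReal ‖y‖ ^ ρ *
        ∫⁻ t, ENNReal.ofReal ‖fderiv ℝ u (x - t • y)‖ ^ ρ ∂ν := by
    intro x
    have hcont : Continuous fun t : ℝ => ‖fderiv ℝ u (x - t • y)‖ :=
      (hDu.comp (continuous_const.sub (continuous_id.smul continuous_const))).norm
    have hmeas : AEMeasurable (fun t : ℝ => ENNReal.ofReal ‖fderiv ℝ u (x - t • y)‖) ν :=
      (ENNReal.continuous_ofReal.comp hcont).measurable.aemeasurable
    calc (‖u (x - y) - u x‖₊ : ENNReal) ^ ρ
        ≤ ENNReal.ofReal (‖y‖ * ∫ t in (0:ℝ)..1, ‖fderiv ℝ u (x - t • y)‖) ^ ρ := by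
          rw [← enorm_eq_nnnorm, ← ofReal_norm]
          exact ENNReal.rpow_le_rpow (ENNReal.ofReal_le_ofReal (ftc_pointwise hu x y)) hρ0.le
      _ = ENNReal.ofReal ‖y‖ ^ ρ *
            ENNReal.ofReal (∫ t in (0:ℝ)..1, ‖fderiv ℝ u (x - t • y)‖) ^ ρ := by
          rw [ENNReal.ofReal_mul (norm_nonneg _),
            ENNReal.mul_rpow_of_nonneg _ _ hρ0.le]
      _ = ENNReal.ofReal ‖y‖ ^ ρ *
            (∫⁻ t, ENNReal.ofReal ‖fderiv ℝ u (x - t • y)‖ ∂ν) ^ ρ := by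
          rw [intervalIntegral.integral_of_le zero_le_one,
            ofReal_integral_eq_lintegral_ofReal
              (hcont.integrableOn_Ioc)
              (Filter.Eventually.of_forall fun t => norm_nonneg _)]
      _ ≤ _ := mul_le_mul_right (jensen hρ1 hmeas) _
  have hswap : (∫⁻ x, ∫⁻ t, ENNReal.ofReal ‖fderiv ℝ u (x - t • y)‖ ^ ρ ∂ν) = K := by
    rw [lintegral_lintegral_swap]
    · have inner : ∀ t : ℝ, (∫⁻ x, ENNReal.ofReal ‖fderiv ℝ u (x - t • y)‖ ^ ρ) = K := by
        intro t
        have h2 : (∫⁻ x, ENNReal.ofReal ‖fderiv ℝ u (x - t • y)‖ ^ ρ) =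
            ∫⁻ x, ENNReal.ofReal ‖fderiv ℝ u x‖ ^ ρ :=
          (measurePreserving_sub_right volume (t • y)).lintegral_comp
            (ENNReal.continuous_rpow_const.comp
              (ENNReal.continuous_ofReal.comp hDu.norm)).measurable
        rw [h2, hK]
        apply lintegral_congr fun x => ?_
        rw [ofReal_norm, enorm_eq_nnnorm]
      rw [lintegral_congr inner, lintegral_const, measure_univ, mul_one]
    · apply Continuous.aemeasurable
      apply ENNReal.continuous_rpow_const.comp
      apply ENNReal.continuous_ofReal.comp
      exact (hDu.comp (continuous_fst.sub (continuous_snd.smul continuous_const))).norm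
  calc (∫⁻ x, (‖u (x - y) - u x‖₊ : ENNReal) ^ ρ) ^ (1/ρ)
      ≤ (∫⁻ x, ENNReal.ofReal ‖y‖ ^ ρ *
          ∫⁻ t, ENNReal.ofReal ‖fderiv ℝ u (x - t • y)‖ ^ ρ ∂ν) ^ (1/ρ) :=
        ENNReal.rpow_le_rpow (lintegral_mono hpt) (by positivity)
    _ = (ENNReal.ofReal ‖y‖ ^ ρ * K) ^ (1/ρ) := by
        rw [lintegral_const_mul' _ _ (ENNReal.rpow_ne_top_of_nonneg hρ0.le ENNReal.ofReal_ne_top),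
          hswap]
    _ = ENNReal.ofReal ‖y‖ * K ^ (1/ρ) := by
        rw [ENNReal.mul_rpow_of_nonneg _ _ (by positivity), ← ENNReal.rpow_mul,
          mul_one_div_cancel hρ0.ne', ENNReal.rpow_one]

lemma key_bound (hρ1 : 1 ≤ ρ) {u : Ed d → ℂ} (hu : ContDiff ℝ (⊤ : ℕ∞) u)
    (hsupp : HasCompactSupport u) (y : Ed d) :
    LpNorm ρ (fun x => u (x - y) - u x) ≤
      min (2 * LpNorm ρ u) (‖y‖ * gradLpNorm ρ u) := by
  have hρ0 : (0:ℝ) < ρ := lt_of_lt_of_le zero_lt_one hρ1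
  have hcu : Continuous u := hu.continuous
  have hDu : Continuous (fderiv ℝ u) := hu.continuous_fderiv (by simp)
  have hshift : Continuous fun x : Ed d => u (x - y) :=
    hcu.comp (continuous_id.sub continuous_const)
  have hdiff : Continuous fun x : Ed d => u (x - y) - u x := hshift.sub hcu
  set nd : ENNReal := ∫⁻ x, (‖u (x - y) - u x‖₊ : ENNReal) ^ ρ with hnd
  set nu : ENNReal := ∫⁻ x, (‖u x‖₊ : ENNReal) ^ ρ with hnu
  set nD : ENNReal := ∫⁻ x, (‖fderiv ℝ u x‖₊ : ENNReal) ^ ρ with hnD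
  have hnu_ne : nu ≠ ⊤ := fin_lintegral hρ0 hcu hsupp
  have hnD_ne : nD ≠ ⊤ := fin_lintegral hρ0 hDu (hsupp.fderiv (𝕜 := ℝ))
  have hLd : LpNorm ρ (fun x => u (x - y) - u x) = (nd ^ (1/ρ)).toReal :=
    bridge hρ0 hdiff.aestronglyMeasurable
  have hLu : LpNorm ρ u = (nu ^ (1/ρ)).toReal := bridge hρ0 hcu.aestronglyMeasurable
  have hLD : gradLpNorm ρ u = (nD ^ (1/ρ)).toReal := bridge hρ0 hDu.aestronglyMeasurable
  refine le_min ?_ ?_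
  · have h1 : nd ^ (1/ρ) ≤ 2 * nu ^ (1/ρ) := by
      have ht0 := triangle hρ1 hshift hcu
      rw [translate (ρ := ρ) hcu y] at ht0
      rw [two_mul]
      exact ht0
    have hfin : (2 : ENNReal) * nu ^ (1/ρ) ≠ ⊤ :=
      ENNReal.mul_ne_top (by norm_num) (ENNReal.rpow_ne_top_of_nonneg (by positivity) hnu_ne)
    rw [hLd, hLu]
    calc (nd ^ (1/ρ)).toReal ≤ ((2 : ENNReal) * nu ^ (1/ρ)).toReal :=
          ENNReal.toReal_mono hfin h1
      _ = 2 * (nu ^ (1/ρ)).toReal := by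
          rw [ENNReal.toReal_mul]; norm_num
  · have h1 : nd ^ (1/ρ) ≤ ENNReal.ofReal ‖y‖ * nD ^ (1/ρ) := grad_bound hρ1 hu y
    have hfin : ENNReal.ofReal ‖y‖ * nD ^ (1/ρ) ≠ ⊤ :=
      ENNReal.mul_ne_top ENNReal.ofReal_ne_top
        (ENNReal.rpow_ne_top_of_nonneg (by positivity) hnD_ne)
    rw [hLd, hLD]
    calc (nd ^ (1/ρ)).toReal ≤ (ENNReal.ofReal ‖y‖ * nD ^ (1/ρ)).toReal :=
          ENNReal.toReal_mono hfin h1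
      _ = ‖y‖ * (nD ^ (1/ρ)).toReal := by
          rw [ENNReal.toReal_mul, ENNReal.toReal_ofReal (norm_nonneg _)]

end BesovAuxNS

/-- Embedding of `W^{1,ρ}` into the Besov space `B^s_{ρ,2}`, as a seminorm
bound: for `d ≥ 1`, `1 ≤ ρ < ∞`, `0 < s < 1`, there is `C = C(d,s,ρ) > 0` such that for every
`u ∈ C_c^∞(ℝ^d; ℂ)`,
`∫_0^∞ τ^{−1−2s} (sup_{|y|<τ} ‖u(·−y)−u‖_ρ)² dτ ≤ C (‖u‖_ρ + ‖∇u‖_ρ)²`. -/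
theorem besov_seminorm_bound
    {d : ℕ} (hd : 1 ≤ d) (ρ s : ℝ) (hρ : 1 ≤ ρ) (hs0 : 0 < s) (hs1 : s < 1) :
    ∃ C : ℝ, 0 < C ∧ ∀ u : Ed d → ℂ, ContDiff ℝ (⊤ : ℕ∞) u → HasCompactSupport u →
      (∫ τ in Set.Ioi (0 : ℝ), τ ^ (-1 - 2 * s) *
          sSup ((fun y => LpNorm ρ (fun x => u (x - y) - u x)) '' Metric.ball 0 τ) ^ 2) ≤
        C * (LpNorm ρ u + gradLpNorm ρ u) ^ 2 := by
  classical
  have h2s : (0:ℝ) < 2 - 2 * s := by linarith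
  have hρ0 : (0:ℝ) < ρ := lt_of_lt_of_le zero_lt_one hρ
  refine ⟨1/(2-2*s) + 2/s, by positivity, ?_⟩
  intro u hu hsupp
  set A := LpNorm ρ u with hA
  set B := gradLpNorm ρ u with hB
  have hLp0 : ∀ f : Ed d → ℂ, 0 ≤ LpNorm ρ f := fun f =>
    Real.rpow_nonneg (integral_nonneg fun x => Real.rpow_nonneg (norm_nonneg _) _) _
  have hA0 : 0 ≤ A := hLp0 u
  have hB0 : 0 ≤ B :=
    Real.rpow_nonneg (integral_nonneg fun x => Real.rpow_nonneg (norm_nonneg _) _) _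
  have hkey := fun y => BesovAuxNS.key_bound hρ hu hsupp y
  set g : ℝ → ℝ := fun τ => if τ ≤ 1 then τ^(1-2*s)*B^2 else τ^(-1-2*s)*(4*A^2) with hg
  have hunion : Set.Ioc (0:ℝ) 1 ∪ Set.Ioi 1 = Set.Ioi 0 := Set.Ioc_union_Ioi_eq_Ioi zero_le_one
  have hg1 : IntegrableOn g (Set.Ioc (0:ℝ) 1) := by
    apply IntegrableOn.congr_fun (f := fun τ : ℝ => τ^(1-2*s)*B^2)
    · exact (intervalIntegrable_iff_integrableOn_Ioc_of_le zero_le_one).1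
        ((intervalIntegral.intervalIntegrable_rpow' (by linarith)).mul_const _)
    · intro τ hτ
      simp only [hg, if_pos hτ.2]
    · exact measurableSet_Ioc
  have hg2 : IntegrableOn g (Set.Ioi (1:ℝ)) := by
    apply IntegrableOn.congr_fun (f := fun τ : ℝ => τ^(-1-2*s)*(4*A^2))
    · exact (integrableOn_Ioi_rpow_of_lt (by linarith) zero_lt_one).mul_const _
    · intro τ hτ
      simp only [hg, if_neg (not_le.2 (Set.mem_Ioi.mp hτ))]
    · exact measurableSet_Ioi
  have hg_int : IntegrableOn g (Set.Ioi (0:ℝ)) := by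
    rw [← hunion]
    exact hg1.union hg2
  have hmain : (∫ τ in Set.Ioi (0 : ℝ), τ ^ (-1 - 2 * s) *
      sSup ((fun y => LpNorm ρ (fun x => u (x - y) - u x)) '' Metric.ball 0 τ) ^ 2) ≤
      ∫ τ in Set.Ioi (0:ℝ), g τ := by
    apply integral_mono_of_nonneg
    · rw [Filter.EventuallyLE, ae_restrict_iff' measurableSet_Ioi]
      exact Filter.Eventually.of_forall fun τ hτ =>
        mul_nonneg (Real.rpow_nonneg (le_of_lt hτ) _) (sq_nonneg _)
    · exact hg_int
    · rw [Filter.EventuallyLE, ae_restrict_iff' measurableSet_Ioi]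
      apply Filter.Eventually.of_forall
      intro τ hτ
      simp only [Set.mem_Ioi] at hτ
      set S := (fun y => LpNorm ρ (fun x => u (x - y) - u x)) '' Metric.ball 0 τ with hS
      have hmin0 : 0 ≤ min (2*A) (τ*B) := le_min (by positivity) (mul_nonneg hτ.le hB0)
      have hSle : sSup S ≤ min (2*A) (τ*B) := by
        apply Real.sSup_le _ hmin0
        intro v hv
        obtain ⟨y, hy, rfl⟩ := hv
        have hynorm : ‖y‖ < τ := by rwa [mem_ball_zero_iff] at hy
        exact (hkey y).trans
          (min_le_min le_rfl (mul_le_mul_of_nonneg_right hynorm.le hB0))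
      have hS0 : 0 ≤ sSup S := by
        apply Real.sSup_nonneg
        intro v hv
        obtain ⟨y, _, rfl⟩ := hv
        exact hLp0 _
      have hsq : sSup S ^ 2 ≤ min (2*A) (τ*B) ^ 2 := pow_le_pow_left₀ hS0 hSle 2
      by_cases hτ1 : τ ≤ 1
      · have : min (2*A) (τ*B) ^ 2 ≤ (τ*B)^2 := pow_le_pow_left₀ hmin0 (min_le_right _ _) 2
        have hτpow : τ^(-1-2*s) * τ^(2:ℕ) = τ^(1-2*s) := by
          rw [← Real.rpow_natCast τ 2, ← Real.rpow_add hτ]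
          congr 1
          push_cast
          ring
        calc τ ^ (-1-2*s) * sSup S ^ 2 ≤ τ ^ (-1-2*s) * (τ*B)^2 :=
              mul_le_mul_of_nonneg_left (hsq.trans this) (Real.rpow_nonneg hτ.le _)
          _ = τ^(1-2*s) * B^2 := by rw [mul_pow, ← mul_assoc, hτpow]
          _ = g τ := by rw [hg]; simp only [if_pos hτ1]
      · have : min (2*A) (τ*B) ^ 2 ≤ 4*A^2 := by
          calc min (2*A) (τ*B) ^ 2 ≤ (2*A)^2 := pow_le_pow_left₀ hmin0 (min_le_left _ _) 2
            _ = 4*A^2 := by ring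
        calc τ ^ (-1-2*s) * sSup S ^ 2 ≤ τ ^ (-1-2*s) * (4*A^2) :=
              mul_le_mul_of_nonneg_left (hsq.trans this) (Real.rpow_nonneg hτ.le _)
          _ = g τ := by rw [hg]; simp only [if_neg hτ1]
  refine hmain.trans ?_
  have hsplit : ∫ τ in Set.Ioi (0:ℝ), g τ =
      (∫ τ in Set.Ioc (0:ℝ) 1, g τ) + ∫ τ in Set.Ioi (1:ℝ), g τ := by
    rw [← hunion, setIntegral_union (Set.Ioc_disjoint_Ioi le_rfl) measurableSet_Ioi hg1 hg2]
  have he1 : (∫ τ in Set.Ioc (0:ℝ) 1, g τ) = (1/(2-2*s)) * B^2 := by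
    rw [setIntegral_congr_fun measurableSet_Ioc
      (fun τ hτ => by simp only [hg, if_pos hτ.2] : Set.EqOn g (fun τ => τ^(1-2*s)*B^2) _)]
    rw [← intervalIntegral.integral_of_le zero_le_one, intervalIntegral.integral_mul_const,
      integral_rpow (Or.inl (by linarith))]
    rw [Real.one_rpow, Real.zero_rpow (by linarith : 1-2*s+1 ≠ 0)]
    rw [show (1:ℝ)-2*s+1 = 2-2*s by ring]
    norm_num
  have he2 : (∫ τ in Set.Ioi (1:ℝ), g τ) = (1/(2*s)) * (4*A^2) := by
    rw [setIntegral_congr_fun measurableSet_Ioi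
      (fun τ hτ => by simp only [hg, if_neg (not_le.2 (Set.mem_Ioi.mp hτ))] :
        Set.EqOn g (fun τ => τ^(-1-2*s)*(4*A^2)) _)]
    rw [MeasureTheory.integral_mul_const, integral_Ioi_rpow_of_lt (by linarith) zero_lt_one]
    rw [Real.one_rpow, show (-1:ℝ)-2*s+1 = -(2*s) by ring, div_neg, neg_div, neg_neg]
  rw [hsplit, he1, he2]
  have hc1 : (0:ℝ) ≤ 1/(2-2*s) := by positivity
  have hc2 : (0:ℝ) ≤ 2/s := by positivity
  have h1 : B^2 ≤ (A+B)^2 := by nlinarith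
  have h2 : A^2 ≤ (A+B)^2 := by nlinarith
  have he3 : (1/(2*s)) * (4*A^2) = (2/s) * A^2 := by
    field_simp
    ring
  rw [he3, hA, hB] at *
  calc (1/(2-2*s)) * B^2 + (2/s) * A^2
      ≤ (1/(2-2*s)) * (A+B)^2 + (2/s) * (A+B)^2 :=
        add_le_add (mul_le_mul_of_nonneg_left h1 hc1) (mul_le_mul_of_nonneg_left h2 hc2)
    _ = (1/(2-2*s) + 2/s) * (LpNorm ρ u + gradLpNorm ρ u)^2 := by rw [hA, hB]; ring
end
end

section
/- (Pointwise estimate on the interaction nonlinearity.) Let σ > 0. There exists a constant C > 0, depending only on σ, such that for all complex numbers z₁, z₂, z₃: | |z₁+z₂+z₃|^σ (z₁+z₂+z₃) − |z₁|^σ z₁ − |z₂|^σ z₂ | ≤ C ( |z₂|^σ |z₁| + |z₁|^σ |z₂| + |z₁|^σ |z₃| + |z₂|^σ |z₃| + |z₃|^{σ+1} ). -/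
/-!
Write `F z = ‖z‖^σ • z` and `s = z₁ + z₂`. Splitting
`F (s + z₃) - F z₁ - F z₂ = (F (s + z₃) - F s) + (F s - F z₁ - F z₂)`, everything reduces to the
increment bound `‖F (a + b) - F a‖ ≲ ‖a‖^σ ‖b‖ + ‖b‖^(σ+1)`; the pair term follows from it
applied with `‖b‖ ≤ ‖a‖`, since then `‖F b‖ = ‖b‖^(σ+1) ≤ ‖a‖^σ ‖b‖`.

The increment bound comes down to the scalar estimate `|x^σ - y^σ| y ≲ y^σ d + d^(σ+1)` for
`|x - y| ≤ d`: if `y ≤ 2d` all quantities are comparable to `d`; otherwise `x, y ∈ [y/2, 2y]`,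
where the mean value theorem bounds `|x^σ - y^σ|` by a multiple of `y^(σ-1) d`.
-/

open Real Set

namespace Real

lemma add_rpow_le_two_rpow_mul_rpow_add_rpow {p a b : ℝ} (ha : 0 ≤ a) (hb : 0 ≤ b)
    (hp : 0 ≤ p) : (a + b) ^ p ≤ 2 ^ p * (a ^ p + b ^ p) := calc
  (a + b) ^ p ≤ (2 * max a b) ^ p := by rw [two_mul]; gcongr <;> simp
  _ = 2 ^ p * max a b ^ p := mul_rpow zero_le_two (le_max_of_le_left ha)
  _ ≤ 2 ^ p * (a ^ p + b ^ p) := by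
      gcongr
      rcases max_cases a b with ⟨h, -⟩ | ⟨h, -⟩ <;> rw [h]
      · exact le_add_of_nonneg_right (rpow_nonneg hb p)
      · exact le_add_of_nonneg_left (rpow_nonneg ha p)

lemma rpow_le_rpow_add_rpow_of_mem_Icc {a b t : ℝ} (p : ℝ) (ha : 0 < a) (ht : t ∈ Icc a b) :
    t ^ p ≤ a ^ p + b ^ p := by
  rcases le_total 0 p with hp | hp
  · exact (rpow_le_rpow (ha.le.trans ht.1) ht.2 hp).trans
      (le_add_of_nonneg_left (rpow_nonneg ha.le p))
  · exact (rpow_le_rpow_of_nonpos ha ht.1 hp).trans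
      (le_add_of_nonneg_right (rpow_nonneg (ha.le.trans (ht.1.trans ht.2)) p))

lemma abs_rpow_sub_rpow_le_of_mem_Icc {a b x y : ℝ} (p : ℝ) (ha : 0 < a) (hx : x ∈ Icc a b)
    (hy : y ∈ Icc a b) : |x ^ p - y ^ p| ≤ |p| * (a ^ (p - 1) + b ^ (p - 1)) * |x - y| := by
  have hderiv : ∀ t ∈ Icc a b, HasDerivWithinAt (· ^ p) (p * t ^ (p - 1)) (Icc a b) t :=
    fun t ht ↦ (hasDerivAt_rpow_const (Or.inl (ha.trans_le ht.1).ne')).hasDerivWithinAt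
  have hbound : ∀ t ∈ Icc a b, ‖p * t ^ (p - 1)‖ ≤ |p| * (a ^ (p - 1) + b ^ (p - 1)) := by
    intro t ht
    rw [norm_mul, norm_eq_abs, norm_eq_abs, abs_of_pos (rpow_pos_of_pos (ha.trans_le ht.1) _)]
    gcongr
    exact rpow_le_rpow_add_rpow_of_mem_Icc _ ha ht
  simpa only [norm_eq_abs] using
    (convex_Icc a b).norm_image_sub_le_of_norm_hasDerivWithin_le hderiv hbound hy hx

lemma abs_rpow_sub_rpow_mul_le_of_le_two_mul {σ x y d : ℝ} (hσ : 0 ≤ σ) (hx : 0 ≤ x)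
    (hy : 0 ≤ y) (hxy : |x - y| ≤ d) (hyd : y ≤ 2 * d) :
    |x ^ σ - y ^ σ| * y ≤ 2 * 3 ^ σ * d ^ (σ + 1) := by
  have hd : 0 ≤ d := (abs_nonneg _).trans hxy
  have hx3 : x ^ σ ≤ (3 * d) ^ σ :=
    rpow_le_rpow hx (by linarith [(abs_le.mp hxy).2]) hσ
  have hy3 : y ^ σ ≤ (3 * d) ^ σ := rpow_le_rpow hy (by linarith) hσ
  have hdiff : |x ^ σ - y ^ σ| ≤ 3 ^ σ * d ^ σ := by
    rw [← mul_rpow zero_le_three hd, abs_sub_le_iff]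
    constructor <;> linarith [rpow_nonneg hx σ, rpow_nonneg hy σ]
  calc |x ^ σ - y ^ σ| * y ≤ 3 ^ σ * d ^ σ * (2 * d) := by gcongr
    _ = 2 * 3 ^ σ * d ^ (σ + 1) := by rw [rpow_add_one' hd (by linarith)]; ring

lemma abs_rpow_sub_rpow_mul_le_of_two_mul_lt {σ x y d : ℝ} (hσ : 0 ≤ σ)
    (hxy : |x - y| ≤ d) (hyd : 2 * d < y) :
    |x ^ σ - y ^ σ| * y ≤ σ * (2⁻¹ ^ (σ - 1) + 2 ^ (σ - 1)) * (y ^ σ * d) := by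
  have hy : 0 < y := by linarith [(abs_nonneg _).trans hxy]
  have hmem : ∀ t, |t - y| ≤ d → t ∈ Icc (2⁻¹ * y) (2 * y) := fun t ht ↦ by
    constructor <;> linarith [abs_le.mp ht]
  have hmvt := abs_rpow_sub_rpow_le_of_mem_Icc σ (by positivity) (hmem x hxy)
    (hmem y (by simpa using (abs_nonneg _).trans hxy))
  rw [mul_rpow (by norm_num) hy.le, mul_rpow (by norm_num) hy.le, abs_of_nonneg hσ] at hmvt
  calc |x ^ σ - y ^ σ| * y
      ≤ σ * (2⁻¹ ^ (σ - 1) * y ^ (σ - 1) + 2 ^ (σ - 1) * y ^ (σ - 1)) * d * y := by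
        gcongr; exact hmvt.trans (by gcongr)
    _ = σ * (2⁻¹ ^ (σ - 1) + 2 ^ (σ - 1)) * ((y ^ (σ - 1) * y) * d) := by ring
    _ = σ * (2⁻¹ ^ (σ - 1) + 2 ^ (σ - 1)) * (y ^ σ * d) := by
        rw [← rpow_add_one hy.ne', sub_add_cancel]

lemma exists_abs_rpow_sub_rpow_mul_le {σ : ℝ} (hσ : 0 ≤ σ) :
    ∃ K, 0 ≤ K ∧ ∀ {x y d : ℝ}, 0 ≤ x → 0 ≤ y → |x - y| ≤ d →
      |x ^ σ - y ^ σ| * y ≤ K * (y ^ σ * d + d ^ (σ + 1)) := by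
  refine ⟨2 * 3 ^ σ + σ * (2⁻¹ ^ (σ - 1) + 2 ^ (σ - 1)), by positivity,
    fun {x y d} hx hy hxy ↦ ?_⟩
  have hd := (abs_nonneg _).trans hxy
  have : 0 ≤ y ^ σ * d := by positivity
  have : 0 ≤ d ^ (σ + 1) := by positivity
  have : 0 ≤ σ * (2⁻¹ ^ (σ - 1) + 2 ^ (σ - 1)) := by positivity
  rcases le_or_gt y (2 * d) with hyd | hyd
  · nlinarith [abs_rpow_sub_rpow_mul_le_of_le_two_mul hσ hx hy hxy hyd, rpow_nonneg zero_le_three σ]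
  · nlinarith [abs_rpow_sub_rpow_mul_le_of_two_mul_lt hσ hxy hyd, rpow_nonneg zero_le_three σ]

end Real

section PowerNonlinearity

variable {E : Type*} [NormedAddCommGroup E] {σ : ℝ}

lemma norm_add_rpow_le (hσ : 0 ≤ σ) (a b : E) : ‖a + b‖ ^ σ ≤ 2 ^ σ * (‖a‖ ^ σ + ‖b‖ ^ σ) :=
  (rpow_le_rpow (norm_nonneg _) (norm_add_le a b) hσ).trans
    (add_rpow_le_two_rpow_mul_rpow_add_rpow (norm_nonneg a) (norm_nonneg b) hσ)

variable [NormedSpace ℝ E]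

noncomputable def powerNonlinearity (σ : ℝ) (z : E) : E := ‖z‖ ^ σ • z

lemma norm_powerNonlinearity (σ : ℝ) (z : E) : ‖powerNonlinearity σ z‖ = ‖z‖ ^ σ * ‖z‖ := by
  rw [powerNonlinearity, norm_smul, norm_of_nonneg (by positivity)]

lemma exists_norm_powerNonlinearity_add_sub_le (hσ : 0 ≤ σ) :
    ∃ K, 0 ≤ K ∧ ∀ a b : E, ‖powerNonlinearity σ (a + b) - powerNonlinearity σ a‖ ≤
      K * (‖a‖ ^ σ * ‖b‖ + ‖b‖ ^ (σ + 1)) := by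
  obtain ⟨K, hK, hrpow⟩ := exists_abs_rpow_sub_rpow_mul_le hσ
  refine ⟨K + 2 ^ σ, by positivity, fun a b ↦ ?_⟩
  have hdecomp : powerNonlinearity σ (a + b) - powerNonlinearity σ a =
      (‖a + b‖ ^ σ - ‖a‖ ^ σ) • a + ‖a + b‖ ^ σ • b := by
    simp only [powerNonlinearity, sub_smul, smul_add]; abel
  have hmodulus : ‖(‖a + b‖ ^ σ - ‖a‖ ^ σ) • a‖ ≤ K * (‖a‖ ^ σ * ‖b‖ + ‖b‖ ^ (σ + 1)) := by
    rw [norm_smul, norm_eq_abs]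
    exact hrpow (norm_nonneg _) (norm_nonneg _) (by simpa using abs_norm_sub_norm_le (a + b) a)
  have hdirection : ‖‖a + b‖ ^ σ • b‖ ≤ 2 ^ σ * (‖a‖ ^ σ * ‖b‖ + ‖b‖ ^ (σ + 1)) := by
    rw [norm_smul, norm_of_nonneg (by positivity), rpow_add_one' (norm_nonneg b) (by linarith)]
    calc ‖a + b‖ ^ σ * ‖b‖ ≤ 2 ^ σ * (‖a‖ ^ σ + ‖b‖ ^ σ) * ‖b‖ := by
          gcongr; exact norm_add_rpow_le hσ a b
      _ = 2 ^ σ * (‖a‖ ^ σ * ‖b‖ + ‖b‖ ^ σ * ‖b‖) := by ring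
  calc ‖powerNonlinearity σ (a + b) - powerNonlinearity σ a‖
      ≤ ‖(‖a + b‖ ^ σ - ‖a‖ ^ σ) • a‖ + ‖‖a + b‖ ^ σ • b‖ := hdecomp ▸ norm_add_le _ _
    _ ≤ _ := add_le_add hmodulus hdirection
    _ = _ := by ring

lemma exists_norm_powerNonlinearity_add_sub_sub_le (hσ : 0 ≤ σ) :
    ∃ K, 0 ≤ K ∧ ∀ a b : E,
      ‖powerNonlinearity σ (a + b) - powerNonlinearity σ a - powerNonlinearity σ b‖ ≤
        K * (‖b‖ ^ σ * ‖a‖ + ‖a‖ ^ σ * ‖b‖) := by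
  obtain ⟨K, hK, hstep⟩ := exists_norm_powerNonlinearity_add_sub_le (E := E) hσ
  have hsmaller : ∀ a b : E, ‖b‖ ≤ ‖a‖ →
      ‖powerNonlinearity σ (a + b) - powerNonlinearity σ a - powerNonlinearity σ b‖ ≤
        (2 * K + 1) * (‖a‖ ^ σ * ‖b‖) := by
    intro a b hba
    have hb : ‖b‖ ^ σ * ‖b‖ ≤ ‖a‖ ^ σ * ‖b‖ := by gcongr
    calc ‖powerNonlinearity σ (a + b) - powerNonlinearity σ a - powerNonlinearity σ b‖
        ≤ ‖powerNonlinearity σ (a + b) - powerNonlinearity σ a‖ + ‖powerNonlinearity σ b‖ :=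
          norm_sub_le _ _
      _ ≤ K * (‖a‖ ^ σ * ‖b‖ + ‖b‖ ^ σ * ‖b‖) + ‖b‖ ^ σ * ‖b‖ := by
          rw [norm_powerNonlinearity, ← rpow_add_one' (norm_nonneg b) (by linarith)]
          exact add_le_add_left (hstep a b) _
      _ ≤ K * (‖a‖ ^ σ * ‖b‖ + ‖a‖ ^ σ * ‖b‖) + ‖a‖ ^ σ * ‖b‖ := by gcongr
      _ = (2 * K + 1) * (‖a‖ ^ σ * ‖b‖) := by ring
  refine ⟨2 * K + 1, by positivity, fun a b ↦ ?_⟩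
  rcases le_total ‖b‖ ‖a‖ with hba | hab
  · exact (hsmaller a b hba).trans (by gcongr; exact le_add_of_nonneg_left (by positivity))
  · have := hsmaller b a hab
    rw [add_comm b a, sub_right_comm] at this
    exact this.trans (by gcongr; exact le_add_of_nonneg_right (by positivity))

theorem exists_norm_powerNonlinearity_add_add_sub_sub_le (hσ : 0 ≤ σ) :
    ∃ C, 0 < C ∧ ∀ z₁ z₂ z₃ : E,
      ‖powerNonlinearity σ (z₁ + z₂ + z₃) - powerNonlinearity σ z₁ - powerNonlinearity σ z₂‖ ≤
        C * (‖z₂‖ ^ σ * ‖z₁‖ + ‖z₁‖ ^ σ * ‖z₂‖ + ‖z₁‖ ^ σ * ‖z₃‖ + ‖z₂‖ ^ σ * ‖z₃‖ +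
          ‖z₃‖ ^ (σ + 1)) := by
  obtain ⟨K₁, hK₁, hstep⟩ := exists_norm_powerNonlinearity_add_sub_le (E := E) hσ
  obtain ⟨K₂, hK₂, hpair⟩ := exists_norm_powerNonlinearity_add_sub_sub_le (E := E) hσ
  refine ⟨K₁ * 2 ^ σ + K₁ + K₂ + 1, by positivity, fun z₁ z₂ z₃ ↦ ?_⟩
  have hsum : ‖z₁ + z₂‖ ^ σ * ‖z₃‖ ≤ 2 ^ σ * (‖z₁‖ ^ σ * ‖z₃‖ + ‖z₂‖ ^ σ * ‖z₃‖) := by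
    rw [← add_mul, ← mul_assoc]; gcongr; exact norm_add_rpow_le hσ z₁ z₂
  calc ‖powerNonlinearity σ (z₁ + z₂ + z₃) - powerNonlinearity σ z₁ - powerNonlinearity σ z₂‖
      ≤ ‖powerNonlinearity σ (z₁ + z₂ + z₃) - powerNonlinearity σ (z₁ + z₂)‖ +
          ‖powerNonlinearity σ (z₁ + z₂) - powerNonlinearity σ z₁ - powerNonlinearity σ z₂‖ := by
        simpa only [sub_sub] using
          norm_sub_le_norm_sub_add_norm_sub _ (powerNonlinearity σ (z₁ + z₂)) _
    _ ≤ K₁ * (‖z₁ + z₂‖ ^ σ * ‖z₃‖ + ‖z₃‖ ^ (σ + 1)) +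
          K₂ * (‖z₂‖ ^ σ * ‖z₁‖ + ‖z₁‖ ^ σ * ‖z₂‖) := add_le_add (hstep _ _) (hpair _ _)
    _ ≤ K₁ * (2 ^ σ * (‖z₁‖ ^ σ * ‖z₃‖ + ‖z₂‖ ^ σ * ‖z₃‖) + ‖z₃‖ ^ (σ + 1)) +
          K₂ * (‖z₂‖ ^ σ * ‖z₁‖ + ‖z₁‖ ^ σ * ‖z₂‖) := by gcongr
    _ ≤ _ := by
        have : 0 ≤ (2 : ℝ) ^ σ := by positivity
        nlinarith [mul_nonneg (by positivity : 0 ≤ K₁ * 2 ^ σ + K₁ + 1)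
            (by positivity : 0 ≤ ‖z₂‖ ^ σ * ‖z₁‖ + ‖z₁‖ ^ σ * ‖z₂‖),
          mul_nonneg (by positivity : 0 ≤ K₁ + K₂ + 1)
            (by positivity : 0 ≤ ‖z₁‖ ^ σ * ‖z₃‖ + ‖z₂‖ ^ σ * ‖z₃‖),
          mul_nonneg (by positivity : 0 ≤ K₁ * 2 ^ σ + K₂ + 1)
            (by positivity : 0 ≤ ‖z₃‖ ^ (σ + 1))]

end PowerNonlinearity

/-- Pointwise estimate on the interaction nonlinearity: for `σ > 0` there is
`C = C(σ) > 0` such that for all complex `z₁, z₂, z₃`,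
`| |z₁+z₂+z₃|^σ(z₁+z₂+z₃) − |z₁|^σ z₁ − |z₂|^σ z₂ |
  ≤ C (|z₂|^σ|z₁| + |z₁|^σ|z₂| + |z₁|^σ|z₃| + |z₂|^σ|z₃| + |z₃|^{σ+1})`. -/
theorem interaction_nonlinearity_pointwise_estimate (σ : ℝ) (hσ : 0 < σ) :
    ∃ C : ℝ, 0 < C ∧ ∀ z₁ z₂ z₃ : ℂ,
      ‖((‖z₁ + z₂ + z₃‖ ^ σ : ℝ) : ℂ) * (z₁ + z₂ + z₃) -
          ((‖z₁‖ ^ σ : ℝ) : ℂ) * z₁ - ((‖z₂‖ ^ σ : ℝ) : ℂ) * z₂‖ ≤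
        C * (‖z₂‖ ^ σ * ‖z₁‖ + ‖z₁‖ ^ σ * ‖z₂‖ + ‖z₁‖ ^ σ * ‖z₃‖ + ‖z₂‖ ^ σ * ‖z₃‖ +
          ‖z₃‖ ^ (σ + 1)) := by
  simpa only [powerNonlinearity, Complex.real_smul] using
    exists_norm_powerNonlinearity_add_add_sub_sub_le (E := ℂ) hσ.le
end
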